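/- arXiv:1905.07559 — 5 statements merged into one kernel-verified Lean document; each statement's English description precedes it below -/
import Mathlib

section
/- Hierarchical padded partition families yield tree covers: Let (X,d) be a finite metric space admitting an (η,μ)-hierarchical partition family of size k, with 0 < η < 1 < μ. Then X admits a tree cover of size k with distortion μ/η. -/
/-- A finite metric is a tree metric iff it satisfies the four-point condition. -/
def IsTreeMetric {Y : Type*} (ρ : Y → Y → ℝ) : Prop :=
  (∀ x, ρ x x = 0) ∧ (∀ x y, ρ x y = ρ y x) ∧ (∀ x y, x ≠ y → 0 < ρ x y) ∧
  (∀ x y z, ρ x z ≤ ρ x y + ρ y z) ∧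
  (∀ x y z w, ρ x y + ρ z w ≤ max (ρ x z + ρ y w) (ρ x w + ρ y z))

/-!
Fix one hierarchy `E j` and let `ℓ x y` be the finest level at which `x` and `y` still share a
cluster. Since the partitions refine one another, `ℓ x z ≥ min (ℓ x y) (ℓ y z)`, so
`ρ x y := Δ (ℓ x y)` is an ultrametric, hence a tree metric; it dominates `d` because clusters
at level `i` are `Δ i`-bounded. Given `x ≠ y`, pick the finest scale `s` with `d x y ≤ η Δ s`
(if there is none, `ρ x y ≤ Δ 0 < d x y / η` in every tree): the hierarchy that pads the ball
`B(x, η Δ s)` puts `y` in the cluster of `x` at level `s`, so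
`ρ x y ≤ Δ s = μ Δ (s + 1) < (μ / η) d x y`.
-/

theorem four_point_of_ultrametric {Y : Type*} {u : Y → Y → ℝ} (hsymm : ∀ a b, u a b = u b a)
    (hU : ∀ a b c, u a c ≤ max (u a b) (u b c)) (x y z w : Y) :
    u x y + u z w ≤ max (u x z + u y w) (u x w + u y z) := by
  -- bound `u x y` and `u z w` by cross distances in both possible ways; the rest is case analysis
  have hxy₁ := hU x z y
  have hxy₂ := hU x w y
  have hzw₁ := hU z x w
  have hzw₂ := hU z y w
  rw [hsymm z y] at hxy₁ hzw₂
  rw [hsymm w y] at hxy₂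
  rw [hsymm z x] at hzw₁
  grind

theorem isTreeMetric_of_ultrametric {Y : Type*} {u : Y → Y → ℝ} (hzero : ∀ x, u x x = 0)
    (hsymm : ∀ x y, u x y = u y x) (hpos : ∀ x y, x ≠ y → 0 < u x y)
    (hU : ∀ x y z, u x z ≤ max (u x y) (u y z)) : IsTreeMetric u := by
  have hnonneg : ∀ x y, 0 ≤ u x y := fun x y => by
    rcases eq_or_ne x y with rfl | hxy
    exacts [(hzero x).ge, (hpos x y hxy).le]
  refine ⟨hzero, hsymm, hpos, fun x y z => ?_, four_point_of_ultrametric hsymm hU⟩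
  exact (hU x y z).trans (max_le_add_of_nonneg (hnonneg x y) (hnonneg y z))

section Hierarchy

variable {X : Type*} {E : ℕ → X → X → Prop} {B : ℕ}

/-- The finest level `i ≤ B` with `E i x y`, and `0` when there is none. -/
noncomputable def commonLevel (E : ℕ → X → X → Prop) (B : ℕ) (x y : X) : ℕ :=
  open Classical in Nat.findGreatest (fun i => E i x y) B

theorem commonLevel_le (x y : X) : commonLevel E B x y ≤ B := by
  classical
  exact Nat.findGreatest_le B

theorem le_commonLevel {i : ℕ} {x y : X} (hi : i ≤ B) (h : E i x y) :
    i ≤ commonLevel E B x y := by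
  classical
  exact Nat.le_findGreatest hi h

theorem rel_commonLevel {x y : X} (h : commonLevel E B x y ≠ 0) :
    E (commonLevel E B x y) x y := by
  classical
  exact Nat.findGreatest_of_ne_zero rfl h

theorem commonLevel_comm (hE : ∀ i, Equivalence (E i)) (x y : X) :
    commonLevel E B x y = commonLevel E B y x := by
  have key : ∀ x y : X, commonLevel E B x y ≤ commonLevel E B y x := fun x y => by
    rcases eq_or_ne (commonLevel E B x y) 0 with h | h
    · omega
    · exact le_commonLevel (commonLevel_le x y) ((hE _).symm (rel_commonLevel h))
  exact (key x y).antisymm (key y x)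

theorem rel_of_le_of_refines (href : ∀ i, i + 1 ≤ B → ∀ x y : X, E (i + 1) x y → E i x y)
    {a b : ℕ} (hab : a ≤ b) (hb : b ≤ B) {x y : X} (h : E b x y) : E a x y := by
  induction b, hab using Nat.le_induction with
  | base => exact h
  | succ b _ ih => exact ih (by omega) (href b hb x y h)

theorem min_commonLevel_le (hE : ∀ i, Equivalence (E i))
    (href : ∀ i, i + 1 ≤ B → ∀ x y : X, E (i + 1) x y → E i x y) (x y z : X) :
    min (commonLevel E B x y) (commonLevel E B y z) ≤ commonLevel E B x z := by
  set m := min (commonLevel E B x y) (commonLevel E B y z)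
  rcases Nat.eq_zero_or_pos m with h | h
  · omega
  have hxy : E m x y := rel_of_le_of_refines href (min_le_left _ _) (commonLevel_le x y)
    (rel_commonLevel (by omega))
  have hyz : E m y z := rel_of_le_of_refines href (min_le_right _ _) (commonLevel_le y z)
    (rel_commonLevel (by omega))
  exact le_commonLevel ((min_le_left _ _).trans (commonLevel_le x y)) ((hE m).trans hxy hyz)

variable {Δ : ℕ → ℝ}

noncomputable def hierarchyUltrametric (Δ : ℕ → ℝ) (E : ℕ → X → X → Prop) (B : ℕ)
    (x y : X) : ℝ :=
  open Classical in if x = y then 0 else Δ (commonLevel E B x y)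

theorem hierarchyUltrametric_of_ne {x y : X} (h : x ≠ y) :
    hierarchyUltrametric Δ E B x y = Δ (commonLevel E B x y) := by
  classical
  exact if_neg h

theorem hierarchyUltrametric_self (x : X) : hierarchyUltrametric Δ E B x x = 0 := by
  classical
  exact if_pos rfl

theorem hierarchyUltrametric_le_zero (hΔ : Antitone Δ) {x y : X} (h : x ≠ y) :
    hierarchyUltrametric Δ E B x y ≤ Δ 0 := by
  rw [hierarchyUltrametric_of_ne h]
  exact hΔ (Nat.zero_le _)

theorem hierarchyUltrametric_le_of_rel (hΔ : Antitone Δ) {i : ℕ} {x y : X} (h : x ≠ y)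
    (hi : i ≤ B) (hE : E i x y) : hierarchyUltrametric Δ E B x y ≤ Δ i := by
  rw [hierarchyUltrametric_of_ne h]
  exact hΔ (le_commonLevel hi hE)

theorem hierarchyUltrametric_nonneg (hΔpos : ∀ i, 0 < Δ i) (x y : X) :
    0 ≤ hierarchyUltrametric Δ E B x y := by
  rcases eq_or_ne x y with rfl | h
  · exact (hierarchyUltrametric_self x).ge
  · exact hierarchyUltrametric_of_ne h ▸ (hΔpos _).le

theorem hierarchyUltrametric_comm (hE : ∀ i, Equivalence (E i)) (x y : X) :
    hierarchyUltrametric Δ E B x y = hierarchyUltrametric Δ E B y x := by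
  rcases eq_or_ne x y with rfl | h
  · rfl
  · rw [hierarchyUltrametric_of_ne h, hierarchyUltrametric_of_ne h.symm, commonLevel_comm hE]

theorem hierarchyUltrametric_le_max (hE : ∀ i, Equivalence (E i))
    (href : ∀ i, i + 1 ≤ B → ∀ x y : X, E (i + 1) x y → E i x y)
    (hΔ : Antitone Δ) (hΔpos : ∀ i, 0 < Δ i) (x y z : X) :
    hierarchyUltrametric Δ E B x z ≤
      max (hierarchyUltrametric Δ E B x y) (hierarchyUltrametric Δ E B y z) := by
  rcases eq_or_ne x z with rfl | hxz
  · rw [hierarchyUltrametric_self]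
    exact le_max_of_le_left (hierarchyUltrametric_nonneg hΔpos x y)
  rcases eq_or_ne x y with rfl | hxy
  · exact le_max_right _ _
  rcases eq_or_ne y z with rfl | hyz
  · exact le_max_left _ _
  rw [hierarchyUltrametric_of_ne hxz, hierarchyUltrametric_of_ne hxy,
    hierarchyUltrametric_of_ne hyz, ← hΔ.map_min]
  exact hΔ (min_commonLevel_le hE href x y z)

theorem isTreeMetric_hierarchyUltrametric (hE : ∀ i, Equivalence (E i))
    (href : ∀ i, i + 1 ≤ B → ∀ x y : X, E (i + 1) x y → E i x y)
    (hΔ : Antitone Δ) (hΔpos : ∀ i, 0 < Δ i) : IsTreeMetric (hierarchyUltrametric Δ E B) :=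
  isTreeMetric_of_ultrametric hierarchyUltrametric_self (hierarchyUltrametric_comm hE)
    (fun _ _ h => hierarchyUltrametric_of_ne h ▸ hΔpos _)
    (hierarchyUltrametric_le_max hE href hΔ hΔpos)

theorem dist_le_hierarchyUltrametric [PseudoMetricSpace X] (h0 : ∀ x y : X, dist x y ≤ Δ 0)
    (hbdd : ∀ i, i ≤ B → ∀ x y : X, E i x y → dist x y ≤ Δ i) (x y : X) :
    dist x y ≤ hierarchyUltrametric Δ E B x y := by
  rcases eq_or_ne x y with rfl | hxy
  · rw [dist_self, hierarchyUltrametric_self]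
  rw [hierarchyUltrametric_of_ne hxy]
  rcases eq_or_ne (commonLevel E B x y) 0 with h | h
  · exact h ▸ h0 x y
  · exact hbdd _ (commonLevel_le x y) x y (rel_commonLevel h)

end Hierarchy

theorem exists_padded_scale {η μ d : ℝ} (hη : 0 < η) (hμ : 1 ≤ μ) (hd : 0 ≤ d) {Δ : ℕ → ℝ}
    (hstep : ∀ i, Δ i = μ * Δ (i + 1)) {B : ℕ} (hB : η * Δ B < d) :
    ∃ s ≤ B, Δ s ≤ μ / η * d ∧ (s = 0 ∨ d ≤ η * Δ s) := by
  induction B with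
  | zero =>
    refine ⟨0, le_rfl, ?_, Or.inl rfl⟩
    rw [div_mul_eq_mul_div, le_div_iff₀ hη]
    nlinarith
  | succ B ih =>
    by_cases h : η * Δ B < d
    · obtain ⟨s, hs, hsΔ, hsd⟩ := ih h
      exact ⟨s, hs.trans B.le_succ, hsΔ, hsd⟩
    refine ⟨B, B.le_succ, ?_, Or.inr (not_lt.mp h)⟩
    rw [hstep B, div_mul_eq_mul_div, le_div_iff₀ hη]
    nlinarith

/-- An `(η,μ)`-hierarchical partition family of size `k` (modelled as `k`
hierarchies of equivalence relations: `Δ_i`-bounded, refining, with the padding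
property at all scales) yields a tree cover of size `k` with distortion `μ/η`. -/
theorem stmt_6 {X : Type*} [MetricSpace X] [Fintype X] [Nontrivial X]
    (η μ : ℝ) (hη0 : 0 < η) (hη1 : η < 1) (hμ : 1 < μ)
    (k B : ℕ) (Δ : ℕ → ℝ)
    (hΔ : ∀ i, Δ i = Metric.diam (Set.univ : Set X) / μ ^ i)
    (hB : ∀ x y : X, x ≠ y → Δ B ≤ dist x y)
    (E : Fin k → ℕ → X → X → Prop)
    (hequiv : ∀ j i, Equivalence (E j i))
    (hbdd : ∀ j i, i ≤ B → ∀ x y : X, E j i x y → dist x y ≤ Δ i)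
    (href : ∀ j i, i + 1 ≤ B → ∀ x y : X, E j (i + 1) x y → E j i x y)
    (hpad : ∀ (x : X) (i : ℕ), i ≤ B → ∃ j, ∀ y : X, dist x y ≤ η * Δ i → E j i x y) :
    ∃ ρ : Fin k → X → X → ℝ,
      (∀ j, IsTreeMetric (ρ j)) ∧
      (∀ j (x y : X), dist x y ≤ ρ j x y) ∧
      (∀ x y : X, x ≠ y → ∃ j, ρ j x y ≤ (μ / η) * dist x y) := by
  have hbounded : Bornology.IsBounded (Set.univ : Set X) := Set.finite_univ.isBounded
  have hdiam : 0 < Metric.diam (Set.univ : Set X) := Metric.diam_pos Set.nontrivial_univ hbounded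
  have hΔpos : ∀ i, 0 < Δ i := fun i => by rw [hΔ]; positivity
  have hΔanti : Antitone Δ := fun a b hab => by
    rw [hΔ, hΔ]
    exact div_le_div_of_nonneg_left hdiam.le (by positivity) (pow_le_pow_right₀ hμ.le hab)
  have hΔstep : ∀ i, Δ i = μ * Δ (i + 1) := fun i => by
    rw [hΔ, hΔ, pow_succ]
    field_simp
  have hΔ0 : ∀ x y : X, dist x y ≤ Δ 0 := fun x y => by
    rw [hΔ, pow_zero, div_one]
    exact Metric.dist_le_diam_of_mem hbounded (Set.mem_univ x) (Set.mem_univ y)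
  refine ⟨fun j => hierarchyUltrametric Δ (E j) B,
    fun j => isTreeMetric_hierarchyUltrametric (hequiv j) (href j) hΔanti hΔpos,
    fun j => dist_le_hierarchyUltrametric hΔ0 (hbdd j), fun x y hxy => ?_⟩
  have hBd : η * Δ B < dist x y := by nlinarith [hB x y hxy, hΔpos B]
  obtain ⟨s, hsB, hsΔ, hs⟩ := exists_padded_scale hη0 hμ.le dist_nonneg hΔstep hBd
  obtain ⟨j, hj⟩ := hpad x s hsB
  refine ⟨j, le_trans ?_ hsΔ⟩
  rcases hs with rfl | hs
  · exact hierarchyUltrametric_le_zero hΔanti hxy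
  · exact hierarchyUltrametric_le_of_rel hΔanti hxy hsB (hj y hs)
end

section
/- The β-composition of two metric spaces is a metric space: Let (S,d_S) and (T,d_T) be finite metric spaces with at least two points, let γ = max_{t≠t'} d_T(t,t') / min_{s≠s'} d_S(s,s'), and let β ≥ 1/2. Define Z = S × T with d_Z((u,t),(v,t')) = (1/(βγ))·d_T(t,t') if u = v, and d_Z((u,t),(v,t')) = d_S(u,v) if u ≠ v. Then d_Z is a metric on Z. -/
/-!
Within one copy of `T` the composed distance is a rescaled `d_T`, and between copies it is `d_S`,
so every case of the triangle inequality is inherited from `d_T` or `d_S` except the one where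
`p` and `r` lie in the same copy and `q` in another. There the choice of `γ` makes the rescaled
diameter of `T` at most `min d_S / β ≤ 2 · min d_S`, which is at most `d_S(p, q) + d_S(q, r)`.
-/

section Composition

variable {S T : Type*} [MetricSpace S] [MetricSpace T] [DecidableEq S]

def compositionDist (c : ℝ) (p q : S × T) : ℝ :=
  if p.1 = q.1 then c * dist p.2 q.2 else dist p.1 q.1

theorem compositionDist_self (c : ℝ) (p : S × T) : compositionDist c p p = 0 := by
  simp [compositionDist]

theorem compositionDist_comm (c : ℝ) (p q : S × T) :
    compositionDist c p q = compositionDist c q p := by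
  unfold compositionDist
  by_cases h : p.1 = q.1
  · rw [if_pos h, if_pos h.symm, dist_comm]
  · rw [if_neg h, if_neg (Ne.symm h), dist_comm]

theorem compositionDist_pos {c : ℝ} (hc : 0 < c) {p q : S × T} (hpq : p ≠ q) :
    0 < compositionDist c p q := by
  unfold compositionDist
  by_cases h : p.1 = q.1
  · rw [if_pos h]
    exact mul_pos hc (dist_pos.mpr fun h₂ => hpq (Prod.ext h h₂))
  · rw [if_neg h]
    exact dist_pos.mpr h

theorem compositionDist_triangle {c : ℝ} (hc : 0 ≤ c)
    (hsep : ∀ s s' : S, s ≠ s' → ∀ t t' : T, c * dist t t' ≤ 2 * dist s s')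
    (p q r : S × T) :
    compositionDist c p r ≤ compositionDist c p q + compositionDist c q r := by
  obtain ⟨s₁, t₁⟩ := p
  obtain ⟨s₂, t₂⟩ := q
  obtain ⟨s₃, t₃⟩ := r
  unfold compositionDist
  dsimp only
  have hc₁₂ : 0 ≤ c * dist t₁ t₂ := mul_nonneg hc dist_nonneg
  have hc₂₃ : 0 ≤ c * dist t₂ t₃ := mul_nonneg hc dist_nonneg
  by_cases h₁₂ : s₁ = s₂ <;> by_cases h₂₃ : s₂ = s₃
  · subst h₁₂ h₂₃
    simp only [if_true, ← mul_add]
    exact mul_le_mul_of_nonneg_left (dist_triangle t₁ t₂ t₃) hc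
  · subst h₁₂
    simp only [if_true, if_neg h₂₃]
    linarith
  · subst h₂₃
    simp only [if_true, if_neg h₁₂]
    linarith
  · rw [if_neg h₁₂, if_neg h₂₃]
    split_ifs with h₁₃
    · subst h₁₃
      rw [dist_comm s₂ s₁, ← two_mul]
      exact hsep s₁ s₂ h₁₂ t₁ t₃
    · exact dist_triangle s₁ s₂ s₃

end Composition

section DistanceExtremes

variable {X : Type*} [MetricSpace X] [Finite X]

theorem finite_setOf_dist : {d : ℝ | ∃ x y : X, d = dist x y}.Finite :=
  (Set.finite_range fun p : X × X => dist p.1 p.2).subset <| by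
    rintro d ⟨x, y, rfl⟩
    exact ⟨(x, y), rfl⟩

theorem dist_le_sSup_dist (x y : X) : dist x y ≤ sSup {d : ℝ | ∃ x y : X, d = dist x y} :=
  le_csSup finite_setOf_dist.bddAbove ⟨x, y, rfl⟩

theorem finite_setOf_dist_ne : {d : ℝ | ∃ x y : X, x ≠ y ∧ d = dist x y}.Finite :=
  finite_setOf_dist.subset fun _ ⟨x, y, _, hd⟩ => ⟨x, y, hd⟩

theorem sInf_dist_ne_le {x y : X} (h : x ≠ y) :
    sInf {d : ℝ | ∃ x y : X, x ≠ y ∧ d = dist x y} ≤ dist x y :=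
  csInf_le finite_setOf_dist_ne.bddBelow ⟨x, y, h, rfl⟩

theorem sInf_dist_ne_pos [Nontrivial X] : 0 < sInf {d : ℝ | ∃ x y : X, x ≠ y ∧ d = dist x y} := by
  obtain ⟨x₀, y₀, h₀⟩ := exists_pair_ne X
  obtain ⟨x, y, hxy, hd⟩ :=
    Set.Nonempty.csInf_mem (⟨dist x₀ y₀, x₀, y₀, h₀, rfl⟩ :
      {d : ℝ | ∃ x y : X, x ≠ y ∧ d = dist x y}.Nonempty) finite_setOf_dist_ne
  exact hd ▸ dist_pos.mpr hxy

theorem sSup_dist_pos [Nontrivial X] : 0 < sSup {d : ℝ | ∃ x y : X, d = dist x y} := by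
  obtain ⟨x, y, h⟩ := exists_pair_ne X
  exact (dist_pos.mpr h).trans_le (dist_le_sSup_dist x y)

end DistanceExtremes

theorem inv_mul_div_mul_le_two_mul {β M m d : ℝ} (hβ : 1 / 2 ≤ β) (hM : 0 < M) (hm : 0 < m)
    (hd : d ≤ M) : 1 / (β * (M / m)) * d ≤ 2 * m := by
  have hβ₀ : 0 < β := by linarith
  calc 1 / (β * (M / m)) * d ≤ 1 / (β * (M / m)) * M := by gcongr
    _ = m / β := by field_simp
    _ ≤ 2 * m := by rw [div_le_iff₀ hβ₀]; nlinarith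

/-- The `β`-composition of two finite metric spaces is a metric space:
with `γ = max_{t≠t'} d_T(t,t') / min_{s≠s'} d_S(s,s')` and `β ≥ 1/2`, the
function `d_Z` on `S × T` given by `(1/(βγ))·d_T` within a copy and `d_S`
between copies is a metric. -/
theorem stmt_7 {S T : Type*} [MetricSpace S] [MetricSpace T] [Fintype S] [Fintype T]
    [DecidableEq S] [Nontrivial S] [Nontrivial T] (β γ : ℝ) (hβ : 1 / 2 ≤ β)
    (hγ : γ = (sSup {d : ℝ | ∃ t t' : T, d = dist t t'}) /
        (sInf {d : ℝ | ∃ s s' : S, s ≠ s' ∧ d = dist s s'}))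
    (dZ : S × T → S × T → ℝ)
    (hdZ : ∀ p q : S × T,
      dZ p q = if p.1 = q.1 then (1 / (β * γ)) * dist p.2 q.2 else dist p.1 q.1) :
    (∀ p, dZ p p = 0) ∧ (∀ p q, p ≠ q → 0 < dZ p q) ∧
    (∀ p q, dZ p q = dZ q p) ∧
    (∀ p q r, dZ p r ≤ dZ p q + dZ q r) := by
  obtain rfl : dZ = compositionDist (1 / (β * γ)) := funext₂ hdZ
  have hM := sSup_dist_pos (X := T)
  have hm := sInf_dist_ne_pos (X := S)
  have hc : 0 < 1 / (β * γ) := by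
    rw [hγ]
    have : 0 < β := by linarith
    positivity
  have hsep : ∀ s s' : S, s ≠ s' → ∀ t t' : T, 1 / (β * γ) * dist t t' ≤ 2 * dist s s' :=
    fun s s' hss' t t' => by
      rw [hγ]
      exact (inv_mul_div_mul_le_two_mul hβ hM hm (dist_le_sSup_dist t t')).trans
        (by linarith [sInf_dist_ne_le hss'])
  exact ⟨compositionDist_self _, fun p q => compositionDist_pos hc,
    compositionDist_comm _, compositionDist_triangle hc.le hsep⟩
end

section
/- Lower bound for Ramsey tree covers of composed cycles: fix N ≥ 3 and suppose every embedding of the N-point cycle metric C_N into any tree metric requires distortion at least N/3 − 1. Then for every k ≥ 1, any Ramsey tree cover of the k-fold self-composition Z_k(N) = [C_N]_β^k (for any fixed β ≥ 1/2) with k trees has distortion at least N/3 − 1 = (1/3)·|Z_k(N)|^{1/k} − 1. -/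
/-- The shortest path metric of the unweighted `N`-cycle. -/
noncomputable def cycleDist (N : ℕ) (i j : Fin N) : ℝ :=
  ((min (((i : ℤ) - (j : ℤ)).natAbs) (N - (((i : ℤ) - (j : ℤ)).natAbs)) : ℕ) : ℝ)

/-- The metric of the `k`-fold `β`-self-composition `Z_k(N) = [C_N]_β^k`, on
points `Fin k → Fin N` (coordinate `0` being the outermost cycle coordinate):
points agreeing in the outer coordinate are at distance `(1/(βγ))` times their
`Z_{k-1}` distance, where `γ = diam(Z_{k-1}) / min-distance(C_N)`, and otherwise
at the cycle distance of their outer coordinates. -/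
noncomputable def Zdist (N : ℕ) (β : ℝ) : (k : ℕ) → (Fin k → Fin N) → (Fin k → Fin N) → ℝ
  | 0, _, _ => 0
  | (k + 1), f, g =>
    let γ : ℝ := (sSup {d : ℝ | ∃ x y : Fin k → Fin N, d = Zdist N β k x y}) /
      (sInf {d : ℝ | ∃ i j : Fin N, i ≠ j ∧ d = cycleDist N i j})
    if f 0 = g 0 then
      (1 / (β * γ)) * Zdist N β k (fun i => f i.succ) (fun i => g i.succ)
    else cycleDist N (f 0) (g 0)

def IsRamseyTreeCover {X ι : Type*} (d : X → X → ℝ) (α : ℝ) (T : ι → X → X → ℝ) : Prop :=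
  (∀ i, IsTreeMetric (T i)) ∧ (∀ i x y, d x y ≤ T i x y) ∧
    ∀ x, ∃ i, ∀ y, T i x y ≤ α * d x y

namespace IsTreeMetric

variable {X Y : Type*} {ρ : X → X → ℝ}

theorem const_mul (hρ : IsTreeMetric ρ) {c : ℝ} (hc : 0 < c) :
    IsTreeMetric fun x y => c * ρ x y := by
  obtain ⟨hself, hsymm, hpos, htri, hfour⟩ := hρ
  refine ⟨fun x => by simp [hself], fun x y => congrArg (c * ·) (hsymm x y),
    fun x y hxy => mul_pos hc (hpos x y hxy), fun x y z => ?_, fun x y z w => ?_⟩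
  · rw [← mul_add]
    exact mul_le_mul_of_nonneg_left (htri x y z) hc.le
  · rw [← mul_add, ← mul_add, ← mul_add, ← mul_max_of_nonneg _ _ hc.le]
    exact mul_le_mul_of_nonneg_left (hfour x y z w) hc.le

theorem comp_injective (hρ : IsTreeMetric ρ) {f : Y → X} (hf : Function.Injective f) :
    IsTreeMetric fun x y => ρ (f x) (f y) := by
  obtain ⟨hself, hsymm, hpos, htri, hfour⟩ := hρ
  exact ⟨fun x => hself _, fun x y => hsymm _ _, fun x y hxy => hpos _ _ (hf.ne hxy),
    fun x y z => htri _ _ _, fun x y z w => hfour _ _ _ _⟩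

end IsTreeMetric

theorem IsRamseyTreeCover.pullback {X Y ι ι' : Type*} {d : X → X → ℝ} {d' : Y → Y → ℝ}
    {α : ℝ} {T : ι → X → X → ℝ} (hT : IsRamseyTreeCover d α T) {f : Y → X}
    (hf : Function.Injective f) (e : ι' → ι) {c : ℝ} (hc : 0 < c)
    (hd : ∀ y y', d' y y' = c * d (f y) (f y'))
    (hhome : ∀ y, ∃ i, ∀ y', T (e i) (f y) (f y') ≤ α * d (f y) (f y')) :
    IsRamseyTreeCover d' α fun i y y' => c * T (e i) (f y) (f y') := by
  refine ⟨fun i => ((hT.1 (e i)).comp_injective hf).const_mul hc, fun i y y' => ?_, fun y => ?_⟩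
  · rw [hd]
    exact mul_le_mul_of_nonneg_left (hT.2.1 _ _ _) hc.le
  · obtain ⟨i, hi⟩ := hhome y
    refine ⟨i, fun y' => ?_⟩
    rw [hd, mul_left_comm]
    exact mul_le_mul_of_nonneg_left (hi y') hc.le

theorem cycleDist_self (N : ℕ) (i : Fin N) : cycleDist N i i = 0 := by
  simp [cycleDist]

theorem one_le_cycleDist {N : ℕ} {i j : Fin N} (h : i ≠ j) : 1 ≤ cycleDist N i j := by
  have hij : (i : ℤ) ≠ j := by simpa [Fin.ext_iff] using h
  have hi : (i : ℤ) < N := by exact_mod_cast i.isLt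
  have hj : (j : ℤ) < N := by exact_mod_cast j.isLt
  unfold cycleDist
  exact_mod_cast (by omega : 1 ≤ min ((i : ℤ) - j).natAbs (N - ((i : ℤ) - j).natAbs))

theorem one_le_sInf_cycleDist {N : ℕ} (hN : 2 ≤ N) :
    1 ≤ sInf {d : ℝ | ∃ i j : Fin N, i ≠ j ∧ d = cycleDist N i j} :=
  le_csInf ⟨_, ⟨0, by omega⟩, ⟨1, by omega⟩, by simp [Fin.ext_iff], rfl⟩
    (by rintro d ⟨i, j, hij, rfl⟩; exact one_le_cycleDist hij)

section Zdist

variable {N : ℕ} {β : ℝ}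

theorem Zdist_self : ∀ {k : ℕ} (x : Fin k → Fin N), Zdist N β k x x = 0
  | 0, _ => rfl
  | k + 1, x => by simp [Zdist, Zdist_self]

theorem Zdist_succ_of_ne {k : ℕ} {f g : Fin (k + 1) → Fin N} (h : f 0 ≠ g 0) :
    Zdist N β (k + 1) f g = cycleDist N (f 0) (g 0) := by
  simp [Zdist, h]

theorem one_le_sSup_Zdist (hN : 2 ≤ N) {k : ℕ} (hk : 1 ≤ k) :
    1 ≤ sSup {d : ℝ | ∃ x y : Fin k → Fin N, d = Zdist N β k x y} := by
  obtain ⟨k, rfl⟩ : ∃ m, k = m + 1 := ⟨k - 1, by omega⟩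
  have hbdd : BddAbove {d : ℝ | ∃ x y : Fin (k + 1) → Fin N, d = Zdist N β (k + 1) x y} :=
    (Set.finite_range fun p : _ × _ => Zdist N β (k + 1) p.1 p.2).bddAbove.mono
      (by rintro d ⟨x, y, rfl⟩; exact ⟨(x, y), rfl⟩)
  obtain ⟨a, b, hab⟩ : ∃ a b : Fin N, a ≠ b :=
    ⟨⟨0, by omega⟩, ⟨1, by omega⟩, by simp [Fin.ext_iff]⟩
  calc (1 : ℝ) ≤ cycleDist N a b := one_le_cycleDist hab
    _ = Zdist N β (k + 1) (fun _ => a) (fun _ => b) := by rw [Zdist_succ_of_ne hab]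
    _ ≤ _ := le_csSup hbdd ⟨_, _, rfl⟩

-- For `k = 0` the diameter of `Z_k` is `0`, and the scale `1 / (β * γ)` is the junk value `0`.
theorem exists_pos_Zdist_cons_cons (hN : 2 ≤ N) (hβ : 0 < β) {k : ℕ} (hk : 1 ≤ k) :
    ∃ c > 0, ∀ u t t',
      Zdist N β (k + 1) (Fin.cons u t) (Fin.cons u t') = c * Zdist N β k t t' := by
  refine ⟨1 / (β * (sSup {d : ℝ | ∃ x y : Fin k → Fin N, d = Zdist N β k x y} /
    sInf {d : ℝ | ∃ i j : Fin N, i ≠ j ∧ d = cycleDist N i j})), ?_, fun u t t' => ?_⟩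
  · have := one_le_sSup_Zdist (β := β) hN hk
    have := one_le_sInf_cycleDist hN
    positivity
  · simp only [Zdist, Fin.cons_zero, Fin.cons_succ, if_true]

end Zdist

section Zcover

def CycleTreeDistortionBound (N : ℕ) : Prop :=
  ∀ (α' : ℝ) (ρ : Fin N → Fin N → ℝ), 1 ≤ α' → IsTreeMetric ρ →
    (∀ i j : Fin N, cycleDist N i j ≤ ρ i j ∧ ρ i j ≤ α' * cycleDist N i j) →
    (N : ℝ) / 3 - 1 ≤ α'

variable {N : ℕ} {β α : ℝ}

theorem le_of_forall_exists_cons_home (hcycle : CycleTreeDistortionBound N) (hα : 1 ≤ α)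
    {k : ℕ} {ι : Type*}
    {T : ι → (Fin (k + 1) → Fin N) → (Fin (k + 1) → Fin N) → ℝ}
    (hT : IsRamseyTreeCover (Zdist N β (k + 1)) α T) (i : ι)
    (hhome : ∀ u, ∃ t, ∀ y,
      T i (Fin.cons u t) y ≤ α * Zdist N β (k + 1) (Fin.cons u t) y) :
    (N : ℝ) / 3 - 1 ≤ α := by
  choose t ht using hhome
  have hinj : Function.Injective fun u => (Fin.cons u (t u) : Fin (k + 1) → Fin N) :=
    fun u v h => by simpa using congrFun h 0
  have hiso : ∀ u v,
      cycleDist N u v = 1 * Zdist N β (k + 1) (Fin.cons u (t u)) (Fin.cons v (t v)) := by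
    intro u v
    rcases eq_or_ne u v with rfl | huv
    · rw [cycleDist_self, Zdist_self, mul_zero]
    · rw [one_mul, Zdist_succ_of_ne (by simpa using huv)]
      simp
  obtain ⟨htree, hdom, hhome⟩ :=
    hT.pullback hinj (fun _ : Unit => i) one_pos hiso fun u => ⟨(), fun v => ht u _⟩
  refine hcycle α _ hα (htree ()) fun u v => ⟨hdom () u v, ?_⟩
  obtain ⟨_, h⟩ := hhome u
  exact h v

theorem le_of_isRamseyTreeCover_Zdist (hcycle : CycleTreeDistortionBound N) (hN : 2 ≤ N)
    (hβ : 0 < β) (hα : 1 ≤ α) {k : ℕ} (hk : 1 ≤ k)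
    {T : Fin k → (Fin k → Fin N) → (Fin k → Fin N) → ℝ}
    (hT : IsRamseyTreeCover (Zdist N β k) α T) :
    (N : ℝ) / 3 - 1 ≤ α := by
  induction k, hk using Nat.le_induction with
  | base =>
    refine le_of_forall_exists_cons_home hcycle hα hT 0 fun u => ⟨fun _ => u, ?_⟩
    obtain ⟨i, hi⟩ := hT.2.2 (Fin.cons u fun _ => u)
    rwa [Subsingleton.elim i 0] at hi
  | succ k hk ih =>
    by_cases hhome0 : ∀ u, ∃ t, ∀ y,
        T 0 (Fin.cons u t) y ≤ α * Zdist N β (k + 1) (Fin.cons u t) y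
    · exact le_of_forall_exists_cons_home hcycle hα hT 0 hhome0
    push Not at hhome0
    obtain ⟨u, hu⟩ := hhome0
    obtain ⟨c, hc, hscale⟩ := exists_pos_Zdist_cons_cons (β := β) hN hβ hk
    refine ih (hT.pullback (Fin.cons_right_injective u) Fin.succ (inv_pos.2 hc)
      (fun t t' => by rw [hscale, inv_mul_cancel_left₀ hc.ne']) fun t => ?_)
    obtain ⟨i, hi⟩ := hT.2.2 (Fin.cons u t)
    rcases Fin.eq_zero_or_eq_succ i with rfl | ⟨j, rfl⟩
    · obtain ⟨y, hy⟩ := hu t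
      exact absurd (hi y) hy.not_ge
    · exact ⟨j, fun t' => hi _⟩

end Zcover

/-- Lower bound for Ramsey tree covers of composed cycles: if every
(dominating) embedding of `C_N` into a tree metric requires distortion at least
`N/3 − 1`, then for every `k ≥ 1` and `β ≥ 1/2`, any Ramsey tree cover of
`Z_k(N) = [C_N]_β^k` with `k` trees has distortion at least
`N/3 − 1 = (1/3)·|Z_k(N)|^{1/k} − 1`. -/
theorem stmt_12 (N : ℕ) (hN : 3 ≤ N)
    (hcycle : ∀ (α' : ℝ) (ρ : Fin N → Fin N → ℝ), 1 ≤ α' → IsTreeMetric ρ →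
      (∀ i j : Fin N, cycleDist N i j ≤ ρ i j ∧ ρ i j ≤ α' * cycleDist N i j) →
      (N : ℝ) / 3 - 1 ≤ α')
    (k : ℕ) (hk : 1 ≤ k) (β : ℝ) (hβ : 1 / 2 ≤ β) (α : ℝ) (hα : 1 ≤ α)
    (T : Fin k → (Fin k → Fin N) → (Fin k → Fin N) → ℝ)
    (htree : ∀ i, IsTreeMetric (T i))
    (hdom : ∀ i (x y : Fin k → Fin N), Zdist N β k x y ≤ T i x y)
    (hhome : ∀ x : Fin k → Fin N, ∃ i, ∀ y, T i x y ≤ α * Zdist N β k x y) :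
    (N : ℝ) / 3 - 1 ≤ α :=
  le_of_isRamseyTreeCover_Zdist hcycle (by omega) (by linarith) hα hk ⟨htree, hdom, hhome⟩
end

section
/- Diameter growth bound for bottom-up clustering: let 0 < ε < 1/8 and define a sequence where a cluster formed at level i has diameter D_i satisfying D_i ≤ 2·((3/ε)·2^i + D') where D' is the maximum diameter of clusters formed at levels i' ≤ i − log₂(1/ε). Then by induction D_i ≤ (8/ε)·2^i for all levels i, since D' ≤ (8/ε)·2^{i−log₂(1/ε)} = 8·2^i and 2·((3/ε)·2^i + 8·2^i) ≤ (8/ε)·2^i when ε < 1/8. -/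
/-! The bound `(8/ε)·2^i` is self-reproducing: a cluster formed `L = log₂(1/ε)` levels earlier
has diameter at most `(8/ε)·2^(i-L) = 8·2^i`, and `2·((3/ε)·2^i + 8·2^i) ≤ (8/ε)·2^i` exactly when
`ε ≤ 1/8`. Since the recursion only looks `L ≥ 1` levels back, strong induction upwards from the
minimum scale closes the argument. -/

lemma Int.forall_of_lag_induction {P : ℤ → Prop} {i₀ : ℤ} {L : ℕ} (hL : 0 < L)
    (base : ∀ i ≤ i₀, P i) (step : ∀ i : ℤ, (∀ j ≤ i - L, P j) → P i) (i : ℤ) : P i := by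
  induction i using Int.strongRec (m := i₀ + 1) with
  | lt i hi => exact base i (by omega)
  | ge i _ ih => exact step i fun j hj => ih j (by omega)

lemma csSup_image_Iic_le_of_monotone {α β : Type*} [Preorder α] [ConditionallyCompleteLattice β]
    {f B : α → β} (hB : Monotone B) {n : α}
    (h : ∀ j ≤ n, f j ≤ B j) : sSup (f '' {j | j ≤ n}) ≤ B n :=
  csSup_le (Set.image_nonempty.mpr Set.nonempty_Iic) <| by
    rintro _ ⟨j, hj, rfl⟩
    exact (h j hj).trans (hB hj)

lemma two_mul_add_le_div_mul {ε x : ℝ} (hε0 : 0 < ε) (hε8 : ε ≤ 1 / 8) (hx : 0 ≤ x) :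
    2 * ((3 / ε) * x + 8 * x) ≤ (8 / ε) * x := by
  have h16 : 16 ≤ 2 / ε := by rw [le_div_iff₀ hε0]; linarith
  calc 2 * ((3 / ε) * x + 8 * x) = (6 / ε) * x + 16 * x := by ring
    _ ≤ (6 / ε) * x + (2 / ε) * x := by gcongr
    _ = (8 / ε) * x := by ring

theorem stmt_15_general (ε : ℝ) (L : ℕ) (hεL : ε = (2 : ℝ) ^ (-(L : ℤ)))
    (hε0 : 0 < ε) (hε8 : ε < 1 / 8)
    (f : ℤ → ℝ)
    (i₀ : ℤ) (hbase : ∀ i ≤ i₀, f i = 0)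
    (hrec : ∀ i : ℤ, f i ≤ 2 * ((3 / ε) * (2 : ℝ) ^ i + sSup (f '' {i' | i' ≤ i - L}))) :
    ∀ i : ℤ, f i ≤ (8 / ε) * (2 : ℝ) ^ i := by
  have hL : 0 < L := by
    rcases L.eq_zero_or_pos with rfl | hL
    · norm_num [hεL] at hε8
    · exact hL
  have hshift (i : ℤ) : (8 / ε) * (2 : ℝ) ^ (i - L) = 8 * 2 ^ i := by
    rw [hεL, zpow_sub₀ two_ne_zero, zpow_neg]
    field_simp
  have hmono : Monotone fun i : ℤ => (8 / ε) * (2 : ℝ) ^ i :=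
    (zpow_right_mono₀ one_le_two).const_mul (by positivity)
  refine Int.forall_of_lag_induction (P := fun i => f i ≤ (8 / ε) * 2 ^ i) (i₀ := i₀) hL
    (fun i hi => ?_) fun i ih => ?_
  · rw [hbase i hi]
    positivity
  have hsup := csSup_image_Iic_le_of_monotone hmono ih
  calc f i ≤ 2 * ((3 / ε) * 2 ^ i + 8 * 2 ^ i) := by linarith [hrec i, hshift i]
    _ ≤ (8 / ε) * 2 ^ i := two_mul_add_le_div_mul hε0 hε8.le (by positivity)

/-- Diameter growth bound for bottom-up clustering: if `ε = 2^{-L} < 1/8` and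
`f : ℤ → ℝ` (diameters by level) is nonnegative, vanishes below some minimum
scale, and satisfies `f(i) ≤ 2·((3/ε)·2^i + sup_{i' ≤ i − L} f(i'))`, then
`f(i) ≤ (8/ε)·2^i` for every level `i`. -/
theorem stmt_15 (ε : ℝ) (L : ℕ) (hεL : ε = (2 : ℝ) ^ (-(L : ℤ)))
    (hε0 : 0 < ε) (hε8 : ε < 1 / 8)
    (f : ℤ → ℝ) (hf0 : ∀ i, 0 ≤ f i)
    (hbdd : ∀ i : ℤ, BddAbove (f '' {i' | i' ≤ i}))
    (i₀ : ℤ) (hbase : ∀ i ≤ i₀, f i = 0)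
    (hrec : ∀ i : ℤ, f i ≤ 2 * ((3 / ε) * (2 : ℝ) ^ i + sSup (f '' {i' | i' ≤ i - L}))) :
    ∀ i : ℤ, f i ≤ (8 / ε) * (2 : ℝ) ^ i :=
  stmt_15_general ε L hεL hε0 hε8 f i₀ hbase hrec
end

section
/- Tree cover distortion from near-additive cluster paths: Let (X,d) be a metric space, 0 < ε < 1/8, and x,u,v ∈ X with d(x,u) ≤ 2^i, (1/ε)·2^{i−1} ≤ d(u,v) < (1/ε)·2^i. Suppose a tree T containing x,u,v satisfies d_T(x,w) ≤ d(x,w) + 2^{i+4} for every w ∈ B(x, (2/ε)·2^i). Then d_T(u,v) ≤ d_T(u,x) + d_T(x,v) ≤ (1 + c·ε)·d(u,v) for an absolute constant c (e.g. c = 70 suffices). -/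
/-! Both `u` and `v` lie in the ball around `x` where `d_T` is additively close to `d`, so routing
through `x` costs at most `d(u,v) + 2 d(x,u) + 2·2^{i+4} ≤ d(u,v) + 34·2^i`; the lower bound on
`d(u,v)` turns the additive error `34·2^i` into `68 ε · d(u,v)`. -/

theorem via_center_le_of_near {X : Type*} [PseudoMetricSpace X] {dT : X → X → ℝ} {x u v : X}
    {δ : ℝ} (hsymm : dT u x = dT x u) (hu : dT x u ≤ dist x u + δ)
    (hv : dT x v ≤ dist x v + δ) :
    dT u x + dT x v ≤ dist u v + 2 * dist x u + 2 * δ := by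
  have := dist_triangle x u v
  rw [hsymm]
  linarith

theorem two_pow_le_of_half_inv_mul_le {ε r : ℝ} (hε : 0 < ε) (i : ℕ)
    (h : (1 / ε) * 2 ^ i / 2 ≤ r) : (2 : ℝ) ^ i ≤ 2 * ε * r := by
  calc (2 : ℝ) ^ i = 2 * ε * ((1 / ε) * 2 ^ i / 2) := by field_simp
    _ ≤ 2 * ε * r := by gcongr

/-- Tree cover distortion from near-additive cluster paths: if `d(x,u) ≤ 2^i`,
`(1/ε)·2^{i-1} ≤ d(u,v) < (1/ε)·2^i`, and the tree metric `d_T` satisfies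
`d_T(x,w) ≤ d(x,w) + 2^{i+4}` for every `w` in the ball `B(x,(2/ε)·2^i)`, then
`d_T(u,v) ≤ d_T(u,x) + d_T(x,v) ≤ (1 + 70ε)·d(u,v)`. -/
theorem stmt_16 {X : Type*} [MetricSpace X] (ε : ℝ) (hε0 : 0 < ε) (hε8 : ε < 1 / 8)
    (i : ℕ) (x u v : X) (dT : X → X → ℝ)
    (hsymm : ∀ a b, dT a b = dT b a)
    (htri : ∀ a b c, dT a c ≤ dT a b + dT b c)
    (hxu : dist x u ≤ 2 ^ i)
    (hlo : (1 / ε) * 2 ^ i / 2 ≤ dist u v)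
    (hhi : dist u v < (1 / ε) * 2 ^ i)
    (hnear : ∀ w : X, dist x w ≤ (2 / ε) * 2 ^ i → dT x w ≤ dist x w + 2 ^ (i + 4)) :
    dT u v ≤ dT u x + dT x v ∧ dT u x + dT x v ≤ (1 + 70 * ε) * dist u v := by
  have hscale : (2 : ℝ) ^ i ≤ 2 * ε * dist u v := two_pow_le_of_half_inv_mul_le hε0 i hlo
  have hradius : (2 : ℝ) ^ i ≤ (1 / ε) * 2 ^ i :=
    le_mul_of_one_le_left (by positivity) (by rw [le_div_iff₀ hε0]; linarith)
  have hball : (2 / ε) * 2 ^ i = 2 * ((1 / ε) * 2 ^ i) := by ring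
  have hu := hnear u (by linarith)
  have hv := hnear v (by linarith [dist_triangle x u v])
  refine ⟨htri u x v, ?_⟩
  calc dT u x + dT x v ≤ dist u v + 2 * dist x u + 2 * 2 ^ (i + 4) :=
        via_center_le_of_near (hsymm u x) hu hv
    _ ≤ dist u v + 34 * 2 ^ i := by rw [pow_add]; linarith
    _ ≤ dist u v + 68 * ε * dist u v := by linarith
    _ ≤ (1 + 70 * ε) * dist u v := by nlinarith [dist_nonneg (x := u) (y := v)]
end
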